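/- arXiv:math/0207185 — 6 statements merged into one kernel-verified Lean document; each statement's English description precedes it below -/
import Mathlib

section
/- In the subset take-away game on a 3-element set A, the second player wins; in particular, replying to any first move X with the complementary set A \ X yields a position that is a second-player win. -/
/-!
Whatever the first player names, the complement is a legal reply. On a 3-element set one of
`X` and `A \ X` is a singleton `{x}`, and after both moves exactly the proper non-empty subsets
of the 2-element set `A \ {x}` remain: two incomparable singletons, a second-player win.
-/

variable {α : Type*} [DecidableEq α]

/-- Playing move `a` in position `K` removes every simplex containing `a`. -/
def gameMove (K : Finset (Finset α)) (a : Finset α) : Finset (Finset α) :=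
  K.filter fun b => ¬ a ⊆ b

/-- The player to move wins position `K` (normal play). -/
def FirstWins (K : Finset (Finset α)) : Prop :=
  ∃ a : {a // a ∈ K}, ¬ FirstWins (gameMove K a.1)
termination_by K.card
decreasing_by
  refine Finset.card_lt_card ?_
  refine (Finset.ssubset_iff_of_subset (Finset.filter_subset _ _)).mpr ?_
  exact ⟨a.1, a.2, by simp⟩

/-- Standard starting position: all proper non-empty subsets of `A`. -/
def startPos (A : Finset α) : Finset (Finset α) :=
  A.powerset.filter fun s => s ≠ ∅ ∧ s ≠ A

/-- The filled simplex: all non-empty subsets of `A`, including `A`. -/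
def fullSimplex (A : Finset α) : Finset (Finset α) :=
  A.powerset.filter fun s => s ≠ ∅

/-- `K` is an abstract simplicial complex of non-empty sets. -/
def IsComplex (K : Finset (Finset α)) : Prop :=
  ∀ a ∈ K, a ≠ ∅ ∧ ∀ b ⊆ a, b ≠ ∅ → b ∈ K

lemma firstWins_iff (K : Finset (Finset α)) :
    FirstWins K ↔ ∃ a ∈ K, ¬ FirstWins (gameMove K a) := by
  rw [FirstWins]
  exact ⟨fun ⟨a, ha⟩ => ⟨a.1, a.2, ha⟩, fun ⟨a, h, ha⟩ => ⟨⟨a, h⟩, ha⟩⟩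

lemma not_firstWins_of_forall_reply {K : Finset (Finset α)}
    (h : ∀ a ∈ K, ∃ b ∈ gameMove K a, ¬ FirstWins (gameMove (gameMove K a) b)) :
    ¬ FirstWins K := by
  rw [firstWins_iff]
  rintro ⟨a, ha, hlose⟩
  exact hlose ((firstWins_iff _).mpr (h a ha))

lemma not_firstWins_empty : ¬ FirstWins (∅ : Finset (Finset α)) := by
  rw [firstWins_iff]
  simp

lemma gameMove_singleton_self (s : Finset α) : gameMove {s} s = ∅ := by
  simp [gameMove, Finset.filter_singleton]

lemma firstWins_singleton (s : Finset α) : FirstWins {s} :=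
  (firstWins_iff _).mpr ⟨s, Finset.mem_singleton_self s, by
    rw [gameMove_singleton_self]
    exact not_firstWins_empty⟩

lemma gameMove_pair_left {s t : Finset α} (hst : ¬ s ⊆ t) : gameMove {s, t} s = {t} := by
  simp [gameMove, Finset.filter_insert, Finset.filter_singleton, hst]

lemma not_firstWins_pair {s t : Finset α} (hst : ¬ s ⊆ t) (hts : ¬ t ⊆ s) :
    ¬ FirstWins {s, t} := by
  rw [firstWins_iff]
  rintro ⟨a, ha, hlose⟩
  rcases Finset.mem_insert.mp ha with rfl | ha
  · rw [gameMove_pair_left hst] at hlose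
    exact hlose (firstWins_singleton t)
  · rw [Finset.mem_singleton.mp ha, Finset.pair_comm, gameMove_pair_left hts] at hlose
    exact hlose (firstWins_singleton s)

lemma gameMove_comm (K : Finset (Finset α)) (a b : Finset α) :
    gameMove (gameMove K a) b = gameMove (gameMove K b) a := by
  simp only [gameMove, Finset.filter_filter, and_comm]

lemma gameMove_startPos_singleton {A : Finset α} {x : α} (hx : x ∈ A) :
    gameMove (startPos A) {x} = fullSimplex (A.erase x) := by
  ext b
  simp only [gameMove, startPos, fullSimplex, Finset.mem_filter, Finset.mem_powerset,
    Finset.singleton_subset_iff, Finset.subset_erase]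
  constructor
  · rintro ⟨⟨hbA, hb, -⟩, hxb⟩
    exact ⟨⟨hbA, hxb⟩, hb⟩
  · rintro ⟨⟨hbA, hxb⟩, hb⟩
    exact ⟨⟨hbA, hb, by rintro rfl; exact hxb hx⟩, hxb⟩

lemma gameMove_fullSimplex_self (B : Finset α) : gameMove (fullSimplex B) B = startPos B := by
  ext b
  simp only [gameMove, startPos, fullSimplex, Finset.mem_filter, Finset.mem_powerset]
  constructor
  · rintro ⟨⟨hbB, hb⟩, hBb⟩
    exact ⟨hbB, hb, fun h => hBb h.ge⟩
  · rintro ⟨hbB, hb, hne⟩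
    exact ⟨⟨hbB, hb⟩, fun h => hne (hbB.antisymm h)⟩

lemma gameMove_gameMove_startPos_singleton_erase {A : Finset α} {x : α} (hx : x ∈ A) :
    gameMove (gameMove (startPos A) {x}) (A.erase x) = startPos (A.erase x) := by
  rw [gameMove_startPos_singleton hx, gameMove_fullSimplex_self]

lemma Finset.subset_pair_iff_eq {b : Finset α} {y z : α} :
    b ⊆ {y, z} ↔ b = ∅ ∨ b = {y} ∨ b = {z} ∨ b = {y, z} := by
  rw [← Finset.coe_subset, Finset.coe_pair, Set.subset_pair_iff_eq]
  norm_cast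

lemma not_firstWins_startPos_of_card_eq_two {B : Finset α} (hB : B.card = 2) :
    ¬ FirstWins (startPos B) := by
  obtain ⟨y, z, hyz, rfl⟩ := Finset.card_eq_two.mp hB
  have hpos : startPos {y, z} = {{y}, {z}} := by
    ext b
    simp only [startPos, Finset.mem_filter, Finset.mem_powerset, Finset.subset_pair_iff_eq,
      Finset.mem_insert, Finset.mem_singleton]
    constructor
    · rintro ⟨h | h | h | h, h0, hne⟩ <;> simp_all
    · rintro (rfl | rfl) <;> refine ⟨by simp, Finset.singleton_ne_empty _, fun h => ?_⟩ <;>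
        simp [← h] at hB
  rw [hpos]
  exact not_firstWins_pair (by simpa using hyz) (by simpa using hyz.symm)

lemma exists_eq_singleton_or_eq_erase_of_card_eq_three {A X : Finset α} (hA : A.card = 3) (hX : X ∈ startPos A) :
    ∃ x ∈ A, X = {x} ∨ X = A.erase x := by
  simp only [startPos, Finset.mem_filter, Finset.mem_powerset] at hX
  obtain ⟨hXA, hX0, hXne⟩ := hX
  have hpos : 0 < X.card := Finset.card_pos.mpr (Finset.nonempty_iff_ne_empty.mpr hX0)
  have hlt : X.card < 3 := hA ▸ Finset.card_lt_card (Finset.ssubset_iff_subset_ne.mpr ⟨hXA, hXne⟩)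
  by_cases h1 : X.card = 1
  · obtain ⟨x, rfl⟩ := Finset.card_eq_one.mp h1
    exact ⟨x, Finset.singleton_subset_iff.mp hXA, Or.inl rfl⟩
  · have hc : (A \ X).card = 1 := by rw [Finset.card_sdiff_of_subset hXA]; omega
    obtain ⟨x, hx⟩ := Finset.card_eq_one.mp hc
    refine ⟨x, Finset.sdiff_subset (hx ▸ Finset.mem_singleton_self x), Or.inr ?_⟩
    rw [← Finset.sdiff_singleton_eq_erase, ← hx, Finset.sdiff_sdiff_eq_self hXA]

lemma sdiff_mem_gameMove_startPos {A X : Finset α} (hX : X ∈ startPos A) :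
    A \ X ∈ gameMove (startPos A) X := by
  simp only [gameMove, startPos, Finset.mem_filter, Finset.mem_powerset] at hX ⊢
  obtain ⟨hXA, hX0, hXne⟩ := hX
  obtain ⟨x, hx⟩ := Finset.nonempty_iff_ne_empty.mpr hX0
  refine ⟨⟨Finset.sdiff_subset, ?_, ?_⟩, fun h => (Finset.mem_sdiff.mp (h hx)).2 hx⟩
  · rw [ne_eq, Finset.sdiff_eq_empty_iff_subset]
    exact fun h => hXne (hXA.antisymm h)
  · intro h
    have hxA : x ∈ A \ X := h.symm ▸ hXA hx
    exact (Finset.mem_sdiff.mp hxA).2 hx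

theorem stmt2 (A : Finset α) (h : A.card = 3) :
    ¬ FirstWins (startPos A) ∧
    (∀ X ∈ startPos A, ¬ FirstWins (gameMove (gameMove (startPos A) X) (A \ X))) := by
  have residual : ∀ x ∈ A,
      ¬ FirstWins (gameMove (gameMove (startPos A) {x}) (A.erase x)) := by
    intro x hx
    rw [gameMove_gameMove_startPos_singleton_erase hx]
    exact not_firstWins_startPos_of_card_eq_two (by rw [Finset.card_erase_of_mem hx, h])
  have reply : ∀ X ∈ startPos A,
      ¬ FirstWins (gameMove (gameMove (startPos A) X) (A \ X)) := by
    intro X hX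
    obtain ⟨x, hx, rfl | rfl⟩ := exists_eq_singleton_or_eq_erase_of_card_eq_three h hX
    · rw [Finset.sdiff_singleton_eq_erase]
      exact residual x hx
    · rw [Finset.sdiff_erase_self hx, gameMove_comm]
      exact residual x hx
  exact ⟨not_firstWins_of_forall_reply fun X hX =>
    ⟨A \ X, sdiff_mem_gameMove_startPos hX, reply X hX⟩, reply⟩
end

section
/- In the subset take-away game on a 4-element set A, the second player wins. -/
variable {α : Type*} [DecidableEq α]

/-! ### Auxiliary machinery -/

/-- Fueled boolean version of `FirstWins`. -/
def firstWinsF : ℕ → Finset (Finset α) → Bool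
  | 0, _ => false
  | (n+1), K => decide (∃ a ∈ K, firstWinsF n (gameMove K a) = false)

lemma gameMove_card_lt {K : Finset (Finset α)} {a : Finset α} (ha : a ∈ K) :
    (gameMove K a).card < K.card := by
  refine Finset.card_lt_card ?_
  refine (Finset.ssubset_iff_of_subset (Finset.filter_subset _ _)).mpr ?_
  exact ⟨a, ha, by simp⟩

lemma fw_iff : ∀ (n : ℕ) (K : Finset (Finset α)), K.card < n →
    (FirstWins K ↔ firstWinsF n K = true) := by
  intro n
  induction n with
  | zero => intro K hK; omega
  | succ n ih =>
    intro K hK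
    rw [FirstWins]
    simp only [firstWinsF, decide_eq_true_iff]
    constructor
    · rintro ⟨⟨a, ha⟩, hwin⟩
      refine ⟨a, ha, ?_⟩
      have hc : (gameMove K a).card < n := lt_of_lt_of_le (gameMove_card_lt ha) (Nat.lt_succ_iff.mp hK)
      rw [← Bool.not_eq_true, ← ih _ hc]
      exact hwin
    · rintro ⟨a, ha, hfalse⟩
      refine ⟨⟨a, ha⟩, ?_⟩
      have hc : (gameMove K a).card < n := lt_of_lt_of_le (gameMove_card_lt ha) (Nat.lt_succ_iff.mp hK)
      rw [ih _ hc, hfalse]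
      simp

section Image

variable {β : Type*} [DecidableEq β]

lemma image_subset_iff_of_injOn {f : α → β} {A a b : Finset α} (hf : Set.InjOn f A)
    (ha : a ⊆ A) (hb : b ⊆ A) : a.image f ⊆ b.image f ↔ a ⊆ b := by
  rw [← Finset.coe_subset, ← Finset.coe_subset, Finset.coe_image, Finset.coe_image]
  exact hf.image_subset_image_iff (by exact_mod_cast ha) (by exact_mod_cast hb)

lemma gameMove_image {f : α → β} {A : Finset α} (hf : Set.InjOn f A)
    {K : Finset (Finset α)} (hK : ∀ s ∈ K, s ⊆ A) {a : Finset α} (ha : a ∈ K) :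
    gameMove (K.image (Finset.image f)) (a.image f) = (gameMove K a).image (Finset.image f) := by
  ext t
  simp only [gameMove, Finset.mem_filter, Finset.mem_image]
  constructor
  · rintro ⟨⟨s, hs, rfl⟩, hns⟩
    exact ⟨s, ⟨hs, fun hsub => hns ((image_subset_iff_of_injOn hf (hK a ha) (hK s hs)).mpr hsub)⟩, rfl⟩
  · rintro ⟨s, ⟨hs, hns⟩, rfl⟩
    exact ⟨⟨s, hs, rfl⟩, fun hsub => hns ((image_subset_iff_of_injOn hf (hK a ha) (hK s hs)).mp hsub)⟩

lemma firstWinsF_image {f : α → β} {A : Finset α} (hf : Set.InjOn f A) :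
    ∀ (n : ℕ) (K : Finset (Finset α)), (∀ s ∈ K, s ⊆ A) →
      firstWinsF n (K.image (Finset.image f)) = firstWinsF n K := by
  intro n
  induction n with
  | zero => intro K _; rfl
  | succ n ih =>
    intro K hK
    simp only [firstWinsF]
    rw [Bool.eq_iff_iff]
    simp only [decide_eq_true_iff]
    constructor
    · rintro ⟨b, hb, hbf⟩
      obtain ⟨a, ha, rfl⟩ := Finset.mem_image.mp hb
      refine ⟨a, ha, ?_⟩
      rw [← hbf, gameMove_image hf hK ha,
        ih (gameMove K a) (fun s hs => hK s (Finset.filter_subset _ _ hs))]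
    · rintro ⟨a, ha, haf⟩
      refine ⟨a.image f, Finset.mem_image_of_mem _ ha, ?_⟩
      rw [gameMove_image hf hK ha,
        ih (gameMove K a) (fun s hs => hK s (Finset.filter_subset _ _ hs)), haf]

lemma startPos_image {f : α → β} {A : Finset α} (hf : Set.InjOn f A) :
    (startPos A).image (Finset.image f) = startPos (A.image f) := by
  ext t
  simp only [startPos, Finset.mem_image, Finset.mem_filter, Finset.mem_powerset]
  constructor
  · rintro ⟨s, ⟨hsA, hne, hnA⟩, rfl⟩
    refine ⟨Finset.image_subset_image hsA, ?_, ?_⟩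
    · simp only [ne_eq, Finset.image_eq_empty]; exact hne
    · intro hcontra
      apply hnA
      have := (image_subset_iff_of_injOn hf (le_refl A) hsA).mp (le_of_eq hcontra.symm)
      exact Finset.Subset.antisymm hsA this
  · rintro ⟨htA, hne, hnA⟩
    refine ⟨A.filter (fun x => f x ∈ t), ⟨Finset.filter_subset _ _, ?_, ?_⟩, ?_⟩
    · obtain ⟨y, hy⟩ := Finset.nonempty_iff_ne_empty.mpr hne
      obtain ⟨x, hx, rfl⟩ := Finset.mem_image.mp (htA hy)
      exact Finset.ne_empty_of_mem (Finset.mem_filter.mpr ⟨hx, hy⟩)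
    · intro hcontra
      apply hnA
      apply Finset.Subset.antisymm htA
      intro y hy
      obtain ⟨x, hx, rfl⟩ := Finset.mem_image.mp hy
      have : x ∈ A.filter (fun x => f x ∈ t) := by rw [hcontra]; exact hx
      exact (Finset.mem_filter.mp this).2
    · ext y
      simp only [Finset.mem_image, Finset.mem_filter]
      constructor
      · rintro ⟨x, ⟨_, hxt⟩, rfl⟩; exact hxt
      · intro hy
        obtain ⟨x, hx, rfl⟩ := Finset.mem_image.mp (htA hy)
        exact ⟨x, ⟨hx, hy⟩, rfl⟩

end Image

/-! ### Fast bitmask game over lists of naturals -/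

/-- Bitmask encoding of a subset of `Fin 4`. -/
def enc (s : Finset (Fin 4)) : ℕ := ∑ i ∈ s, 2 ^ (i : ℕ)

/-- Fueled game on bitmask lists. -/
def winF : ℕ → List ℕ → Bool
  | 0, _ => false
  | (n+1), L => L.any fun a => ! winF n (L.filter fun b => ! (a ||| b == b))

lemma enc_compat : ∀ a b : Finset (Fin 4), (enc a ||| enc b = enc b) ↔ a ⊆ b := by decide

lemma corr : ∀ (n : ℕ) (K : Finset (Finset (Fin 4))) (L : List ℕ),
    (∀ m : ℕ, m ∈ L ↔ ∃ s ∈ K, enc s = m) → firstWinsF n K = winF n L := by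
  intro n
  induction n with
  | zero => intro K L _; rfl
  | succ n ih =>
    intro K L hKL
    have hmove : ∀ a ∈ K, ∀ m : ℕ, m ∈ L.filter (fun b => ! (enc a ||| b == b)) ↔
        ∃ s ∈ gameMove K a, enc s = m := by
      intro a _ m
      simp only [List.mem_filter, hKL, gameMove, Finset.mem_filter, Bool.not_eq_true',
        beq_eq_false_iff_ne, ne_eq]
      constructor
      · rintro ⟨⟨s, hs, rfl⟩, hne⟩
        exact ⟨s, ⟨hs, fun hsub => hne ((enc_compat a s).mpr hsub)⟩, rfl⟩
      · rintro ⟨s, ⟨hs, hns⟩, rfl⟩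
        exact ⟨⟨s, hs, rfl⟩, fun heq => hns ((enc_compat a s).mp heq)⟩
    simp only [firstWinsF, winF]
    rw [Bool.eq_iff_iff]
    simp only [decide_eq_true_iff, List.any_eq_true, Bool.not_eq_true']
    constructor
    · rintro ⟨a, ha, haf⟩
      refine ⟨enc a, (hKL (enc a)).mpr ⟨a, ha, rfl⟩, ?_⟩
      rw [← ih (gameMove K a) _ (hmove a ha), haf]
    · rintro ⟨m, hm, hmf⟩
      obtain ⟨s, hs, rfl⟩ := (hKL m).mp hm
      refine ⟨s, hs, ?_⟩
      rw [ih (gameMove K s) _ (hmove s hs), hmf]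

def theList : List ℕ := [1, 2, 3, 4, 5, 6, 7, 8, 9, 10, 11, 12, 13, 14]

lemma theList_corr : ∀ m : ℕ, m ∈ theList ↔ ∃ s ∈ startPos (Finset.univ : Finset (Fin 4)), enc s = m := by
  have h1 : ∀ s ∈ startPos (Finset.univ : Finset (Fin 4)), enc s ∈ theList := by decide
  have h2 : ∀ m ∈ theList, ∃ s ∈ startPos (Finset.univ : Finset (Fin 4)), enc s = m := by decide
  intro m
  constructor
  · exact h2 m
  · rintro ⟨s, hs, rfl⟩; exact h1 s hs

set_option maxRecDepth 100000 in
lemma winF_theList : winF 17 theList = false := by decide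

theorem stmt3 (A : Finset α) (h : A.card = 4) : ¬ FirstWins (startPos A) := by
  have hcard4 : A.card = (Finset.univ : Finset (Fin 4)).card := by simp [h]
  have e := Finset.equivOfCardEq hcard4
  classical
  set f : α → Fin 4 := fun x => if hx : x ∈ A then (e ⟨x, hx⟩ : Fin 4) else 0 with hf
  have hinj : Set.InjOn f A := by
    intro x hx y hy hxy
    rw [hf] at hxy
    simp only at hxy
    rw [dif_pos (Finset.mem_coe.mp hx), dif_pos (Finset.mem_coe.mp hy)] at hxy
    have := e.injective (Subtype.ext hxy)
    exact congrArg Subtype.val this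
  have himg : A.image f = Finset.univ := by
    apply Finset.eq_of_subset_of_card_le (Finset.subset_univ _)
    rw [Finset.card_image_of_injOn hinj, h]
    simp
  have hsub : ∀ s ∈ startPos A, s ⊆ A := fun s hs =>
    Finset.mem_powerset.mp (Finset.mem_filter.mp hs).1
  have hlt : (startPos A).card < 17 := by
    have := Finset.card_filter_le A.powerset (fun s => s ≠ ∅ ∧ s ≠ A)
    rw [Finset.card_powerset, h] at this
    calc (startPos A).card ≤ 2 ^ 4 := this
      _ < 17 := by norm_num
  rw [fw_iff 17 _ hlt]
  have key : firstWinsF 17 (startPos A) = false := by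
    rw [← firstWinsF_image hinj 17 _ hsub, startPos_image hinj, himg,
      corr 17 _ theList theList_corr]
    exact winF_theList
  simp [key]
end

section
/- The position consisting of the full (filled-in) simplex on any finite nonempty vertex set A — i.e., the complex of ALL non-empty subsets of A, including A itself — is a first-player win. -/
variable {α : Type*} [DecidableEq α]

lemma gameMove_full_top (A : Finset α) :
    gameMove (fullSimplex A) A = startPos A := by
  ext b
  simp only [gameMove, fullSimplex, startPos, Finset.mem_filter, Finset.mem_powerset]
  constructor
  · rintro ⟨⟨hb, hne⟩, hns⟩
    exact ⟨hb, hne, fun hA => hns (hA ▸ le_refl _)⟩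
  · rintro ⟨hb, hne, hnA⟩
    exact ⟨⟨hb, hne⟩, fun hs => hnA (le_antisymm hb hs)⟩

lemma gameMove_full_proper (A a : Finset α) (ha : a ⊆ A) :
    gameMove (fullSimplex A) a = gameMove (startPos A) a := by
  ext b
  simp only [gameMove, fullSimplex, startPos, Finset.mem_filter, Finset.mem_powerset]
  constructor
  · rintro ⟨⟨hb, hne⟩, hns⟩
    exact ⟨⟨hb, hne, fun hA => hns (hA ▸ ha)⟩, hns⟩
  · rintro ⟨⟨hb, hne, _⟩, hns⟩
    exact ⟨⟨hb, hne⟩, hns⟩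

theorem stmt8 (A : Finset α) (h : A.Nonempty) : FirstWins (fullSimplex A) := by
  by_cases hw : FirstWins (startPos A)
  · rw [FirstWins] at hw
    obtain ⟨⟨a, haK⟩, hwin⟩ := hw
    simp only [startPos, Finset.mem_filter, Finset.mem_powerset] at haK
    obtain ⟨hsub, hne, _⟩ := haK
    rw [FirstWins]
    refine ⟨⟨a, ?_⟩, ?_⟩
    · simp [fullSimplex, Finset.mem_filter, Finset.mem_powerset, hsub, hne]
    · rwa [gameMove_full_proper A a hsub]
  · rw [FirstWins]
    refine ⟨⟨A, ?_⟩, ?_⟩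
    · simp [fullSimplex, Finset.mem_filter, Finset.mem_powerset, h.ne_empty]
    · rwa [gameMove_full_top]
end

section
/- In the standard starting position of subset take-away on an n-element set A, after a move of size 2 (an edge {x,y}), the resulting complex admits (x, y) as a binary star, and its binary-star reduction equals the complex of all non-empty subsets of A \ {x, y} (the filled (n-2)-simplex). -/
variable {α : Type*} [DecidableEq α]

/-- `(x, y)` is a binary star in `K`. -/
def BinaryStar (K : Finset (Finset α)) (x y : α) : Prop :=
  ({x, y} : Finset α) ∉ K ∧
  (∀ a ∈ K, x ∈ a → insert y (a.erase x) ∈ K) ∧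
  (∀ a ∈ K, y ∈ a → insert x (a.erase y) ∈ K)

theorem stmt10 (A : Finset α) (h : 3 ≤ A.card) (x y : α) (hx : x ∈ A) (hy : y ∈ A)
    (hxy : x ≠ y) :
    BinaryStar (gameMove (startPos A) {x, y}) x y ∧
    (gameMove (startPos A) {x, y}).filter (fun a => x ∉ a ∧ y ∉ a) =
      fullSimplex (A \ {x, y}) := by
  have hmem : ∀ a : Finset α, a ∈ gameMove (startPos A) {x, y} ↔
      a ⊆ A ∧ a ≠ ∅ ∧ a ≠ A ∧ ¬ ({x, y} : Finset α) ⊆ a := by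
    intro a
    simp [gameMove, startPos, and_assoc]
  constructor
  · refine ⟨?_, ?_, ?_⟩
    · rw [hmem]; tauto
    · intro a ha hxa
      rw [hmem] at ha ⊢
      obtain ⟨hsub, hne, hnA, hns⟩ := ha
      have hya : y ∉ a := fun hya => hns (by
        intro z hz; simp at hz; rcases hz with rfl | rfl <;> assumption)
      refine ⟨?_, ?_, ?_, ?_⟩
      · intro z hz
        simp [Finset.mem_insert, Finset.mem_erase] at hz
        rcases hz with rfl | ⟨_, hz⟩
        · exact hy
        · exact hsub hz
      · simp [Finset.insert_ne_empty]
      · intro hEq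
        have : x ∈ insert y (a.erase x) := hEq ▸ hx
        simp [hxy, Finset.mem_erase] at this
      · intro hs
        have : x ∈ insert y (a.erase x) := hs (by simp)
        simp [hxy, Finset.mem_erase] at this
    · intro a ha hya
      rw [hmem] at ha ⊢
      obtain ⟨hsub, hne, hnA, hns⟩ := ha
      have hxa : x ∉ a := fun hxa => hns (by
        intro z hz; simp at hz; rcases hz with rfl | rfl <;> assumption)
      refine ⟨?_, ?_, ?_, ?_⟩
      · intro z hz
        simp [Finset.mem_insert, Finset.mem_erase] at hz
        rcases hz with rfl | ⟨_, hz⟩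
        · exact hx
        · exact hsub hz
      · simp [Finset.insert_ne_empty]
      · intro hEq
        have : y ∈ insert x (a.erase y) := hEq ▸ hy
        simp [hxy.symm, Finset.mem_erase] at this
      · intro hs
        have : y ∈ insert x (a.erase y) := hs (by simp)
        simp [hxy.symm, Finset.mem_erase] at this
  · ext a
    simp only [Finset.mem_filter, hmem, fullSimplex, Finset.mem_powerset, Finset.subset_sdiff]
    constructor
    · rintro ⟨⟨hsub, hne, hnA, hns⟩, hxa, hya⟩
      refine ⟨⟨hsub, ?_⟩, hne⟩
      rw [Finset.disjoint_right]
      intro z hz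
      simp at hz
      rcases hz with rfl | rfl
      exacts [hxa, hya]
    · rintro ⟨⟨hsub, hdisj⟩, hne⟩
      rw [Finset.disjoint_right] at hdisj
      have hxa : x ∉ a := hdisj (by simp)
      have hya : y ∉ a := hdisj (by simp)
      refine ⟨⟨hsub, hne, ?_, ?_⟩, hxa, hya⟩
      · rintro rfl; exact hxa hx
      · intro hs; exact hxa (hs (by simp))
end

section
/- Assume Gale's conjecture holds for all starting positions of size less than n (i.e., standard subset take-away on sets of size < n is a second-player win). Then in the standard starting position on an n-element set with n ≥ 3, an opening move of size 1 (a single vertex) is a losing move. -/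
variable {α : Type*} [DecidableEq α]

theorem stmt11 (n : ℕ) (hn : 3 ≤ n)
    (gale : ∀ B : Finset α, B.card < n → ¬ FirstWins (startPos B))
    (A : Finset α) (hA : A.card = n) (v : α) (hv : v ∈ A) :
    FirstWins (gameMove (startPos A) {v}) := by
  have hcard : (A.erase v).card = n - 1 := by
    rw [Finset.card_erase_of_mem hv, hA]
  have hmem : A.erase v ∈ gameMove (startPos A) {v} := by
    simp only [gameMove, startPos, Finset.mem_filter, Finset.mem_powerset,
      Finset.singleton_subset_iff, Finset.mem_erase]
    refine ⟨⟨Finset.erase_subset _ _, ?_, ?_⟩, by simp⟩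
    · intro h
      have := Finset.card_eq_zero.mpr h
      omega
    · intro h
      have := h ▸ hv
      simp at this
  have hkey : gameMove (gameMove (startPos A) {v}) (A.erase v)
      = startPos (A.erase v) := by
    ext s
    simp only [gameMove, startPos, Finset.mem_filter, Finset.mem_powerset,
      Finset.singleton_subset_iff]
    constructor
    · rintro ⟨⟨⟨hsA, hne, hnA⟩, hvs⟩, hns⟩
      refine ⟨Finset.subset_erase.mpr ⟨hsA, hvs⟩, hne, ?_⟩
      intro h; exact hns (h ▸ Finset.Subset.refl _)
    · rintro ⟨hs, hne, hneq⟩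
      have hsA : s ⊆ A := hs.trans (Finset.erase_subset _ _)
      have hvs : v ∉ s := fun h => (Finset.mem_erase.mp (hs h)).1 rfl
      refine ⟨⟨⟨hsA, hne, fun h => hvs (h ▸ hv)⟩, hvs⟩, fun h => hneq ?_⟩
      exact Finset.Subset.antisymm hs h |>.symm ▸ rfl
  rw [FirstWins]
  refine ⟨⟨A.erase v, hmem⟩, ?_⟩
  rw [hkey]
  exact gale _ (by omega)
end

section
/- If a simplicial complex position K admits an automorphism σ of order 2 such that no simplex a ∈ K satisfies both a and σ(a) lying in a common simplex (more precisely: σ has no fixed simplex, and for every a ∈ K, a ∪ σ(a) ∉ K), then K is a second-player win via the strategy of replying to a with σ(a). -/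
variable {α : Type*} [DecidableEq α]

lemma mem_gameMove {K : Finset (Finset α)} {a b : Finset α} :
    b ∈ gameMove K a ↔ b ∈ K ∧ ¬ a ⊆ b := by
  simp [gameMove]

theorem stmt15 (K : Finset (Finset α)) (hK : IsComplex K) (σ : α → α)
    (hinv : Function.Involutive σ)
    (hmap : ∀ a ∈ K, a.image σ ∈ K)
    (hfix : ∀ a ∈ K, a.image σ ≠ a)
    (hspan : ∀ a ∈ K, a ∪ a.image σ ∉ K) :
    ¬ FirstWins K := by
  have himg : ∀ b : Finset α, (b.image σ).image σ = b := by
    intro b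
    rw [Finset.image_image]
    simp [Function.comp_def, hinv _]
  rw [FirstWins]
  push_neg
  rintro ⟨a, ha⟩
  have hnsub : ¬ a ⊆ a.image σ := by
    intro h
    exact hfix a ha (Finset.eq_of_subset_of_card_le h
      (le_of_eq (Finset.card_image_of_injective _ hinv.injective))).symm
  have hσa : a.image σ ∈ gameMove K a := mem_gameMove.mpr ⟨hmap a ha, hnsub⟩
  rw [FirstWins]
  refine ⟨⟨a.image σ, hσa⟩, ?_⟩
  set K'' := gameMove (gameMove K a) (a.image σ) with hK''
  have hmemK'' : ∀ b : Finset α, b ∈ K'' ↔ b ∈ K ∧ ¬ a ⊆ b ∧ ¬ a.image σ ⊆ b := by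
    intro b
    rw [hK'', mem_gameMove, mem_gameMove, and_assoc]
  have hsub : K'' ⊆ K := fun b hb => ((hmemK'' b).mp hb).1
  have hcard : K''.card < K.card := by
    refine Finset.card_lt_card ?_
    refine (Finset.ssubset_iff_of_subset hsub).mpr ⟨a, ha, ?_⟩
    rw [hmemK'']
    intro h
    exact h.2.1 le_rfl
  exact stmt15 K''
    (fun b hb => by
      obtain ⟨hbK, hab, hσab⟩ := (hmemK'' b).mp hb
      refine ⟨(hK b hbK).1, fun c hc hcne => ?_⟩
      rw [hmemK'']
      exact ⟨(hK b hbK).2 c hc hcne, fun h => hab (h.trans hc),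
        fun h => hσab (h.trans hc)⟩)
    σ hinv
    (fun b hb => by
      obtain ⟨hbK, hab, hσab⟩ := (hmemK'' b).mp hb
      rw [hmemK'']
      refine ⟨hmap b hbK, fun h => ?_, fun h => ?_⟩
      · exact hσab (by simpa [himg] using Finset.image_subset_image (f := σ) h)
      · exact hab (by simpa [himg] using Finset.image_subset_image (f := σ) h))
    (fun b hb => hfix b (hsub hb))
    (fun b hb h => hspan b (hsub hb) (hsub h))
termination_by K.card
decreasing_by exact hcard
end
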